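/- arXiv:math/9810056 — 4 statements merged into one kernel-verified Lean document; each statement's English description precedes it below -/
import Mathlib

section
/- Every odd element of an exterior algebra squares to zero: if V is a module over a commutative ring and x belongs to the odd part of the exterior algebra ⋀ V (the sum of the exterior powers of odd degree), then x² = 0. -/
/-!
A product `ι m₁ * ι m₂` of two vectors commutes with every vector, hence is central in `⋀ M`.
An odd element is a sum of terms `ι v` and `ι m₁ * ι m₂ * a` with `a` odd, so by induction
odd elements anticommute with vectors and then with each other. Squaring such a sum, the cross
terms `a * b + b * a` cancel, `ι v * ι v = 0`, and centrality gives
`(ι m₁ * ι m₂ * a) ^ 2 = (ι m₁ * ι m₂) ^ 2 * a ^ 2`.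
-/

namespace ExteriorAlgebra

open CliffordAlgebra

variable {R M : Type*} [CommRing R] [AddCommGroup M] [Module R M]

theorem commute_ι_mul_ι_ι (m₁ m₂ m : M) : Commute (ι R m₁ * ι R m₂) (ι R m) := by
  have h₁ := eq_neg_of_add_eq_zero_left (ι_add_mul_swap (R := R) m₁ m)
  have h₂ := eq_neg_of_add_eq_zero_left (ι_add_mul_swap (R := R) m₂ m)
  rw [Commute, SemiconjBy, mul_assoc, h₂, mul_neg, ← mul_assoc, h₁, neg_mul, neg_neg,
    mul_assoc]

theorem commute_ι_mul_ι (m₁ m₂ : M) (x : ExteriorAlgebra R M) :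
    Commute (ι R m₁ * ι R m₂) x := by
  induction x using ExteriorAlgebra.induction with
  | algebraMap r => exact Algebra.commute_algebraMap_right r _
  | ι m => exact commute_ι_mul_ι_ι m₁ m₂ m
  | mul a b ha hb => exact ha.mul_right hb
  | add a b ha hb => exact ha.add_right hb

theorem mul_add_mul_swap_of_mem_odd_of_forall_ι {x y : ExteriorAlgebra R M}
    (hx : x ∈ evenOdd (0 : QuadraticForm R M) 1) (hy : ∀ m, ι R m * y + y * ι R m = 0) :
    x * y + y * x = 0 := by
  induction x, hx using odd_induction with
  | ι v => exact hy v
  | add a b _ _ ha hb =>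
    rw [add_mul, mul_add, add_add_add_comm, ha, hb, add_zero]
  | ι_mul_ι_mul m₁ m₂ a _ ha =>
    rw [← mul_assoc y, ← (commute_ι_mul_ι m₁ m₂ y).eq, mul_assoc _ a, mul_assoc _ y, ← mul_add,
      ha, mul_zero]

theorem mul_add_mul_swap_of_mem_odd {x y : ExteriorAlgebra R M}
    (hx : x ∈ evenOdd (0 : QuadraticForm R M) 1) (hy : y ∈ evenOdd (0 : QuadraticForm R M) 1) :
    x * y + y * x = 0 :=
  mul_add_mul_swap_of_mem_odd_of_forall_ι hx fun m =>
    (add_comm _ _).trans <|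
      mul_add_mul_swap_of_mem_odd_of_forall_ι hy fun m' => ι_add_mul_swap m' m

end ExteriorAlgebra

open ExteriorAlgebra in
/-- Every odd element of an exterior algebra squares to zero: if `x` belongs to the odd
part of the ℤ/2-grading of `⋀ V` by even and odd exterior degrees, then `x ^ 2 = 0`. -/
theorem stmt2 (R : Type) (M : Type) [CommRing R] [AddCommGroup M] [Module R M]
    (x : ExteriorAlgebra R M)
    (hx : x ∈ CliffordAlgebra.evenOdd (0 : QuadraticForm R M) 1) :
    x ^ 2 = 0 := by
  induction x, hx using CliffordAlgebra.odd_induction with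
  | ι v => exact (sq _).trans (ι_sq_zero v)
  | add a b ha hb iha ihb =>
    rw [sq, add_mul, mul_add, mul_add, ← sq, ← sq, iha, ihb, zero_add, add_zero,
      mul_add_mul_swap_of_mem_odd ha hb]
  | ι_mul_ι_mul m₁ m₂ a _ iha =>
    rw [(commute_ι_mul_ι m₁ m₂ a).mul_pow, iha, mul_zero]
end

section
/- Let k be a Hausdorff topological field, q a natural number, A a graded unital subalgebra of the Grassmann algebra ∧(q) over k, and j : A → k[ζ]/(ζ²) a surjective parity-preserving unital k-algebra homomorphism. For λ ∈ k define j_λ(a₀ + a₁) = β(a₀)·1 + λ·j(a₁) (a₀ even, a₁ odd). Then the map k → ∏_{a ∈ A} k[ζ]/(ζ²), λ ↦ (j_λ(a))_{a ∈ A}, is a homeomorphism of k onto its image, and its image is a closed subset of the product space ∏_{a ∈ A} k[ζ]/(ζ²) (where k[ζ]/(ζ²) ≅ k × k carries the product topology and the infinite product carries the Tychonoff product topology). -/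
open ExteriorAlgebra

/-- The Grassmann algebra `∧(q)` over `k`: the exterior algebra of `k^q`. -/
noncomputable abbrev Grassmann (k : Type) [Field k] (q : ℕ) : Type :=
  ExteriorAlgebra k (Fin q → k)

/-- The ℤ/2-grading of the Grassmann algebra by even and odd exterior degrees. -/
noncomputable def grassGrade (k : Type) [Field k] (q : ℕ) (i : ZMod 2) :
    Submodule k (Grassmann k q) :=
  CliffordAlgebra.evenOdd (0 : QuadraticForm k (Fin q → k)) i

/-- The augmentation homomorphism `β : ∧(q) → k`. -/
noncomputable def grassAug (k : Type) [Field k] (q : ℕ) : Grassmann k q →ₐ[k] k :=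
  ExteriorAlgebra.algebraMapInv

/-!
Each `λ ↦ j_λ(a)` is affine in `λ`, hence continuous. Pick `b = b₀ + b₁ ∈ A` with `j b = ζ`;
since `j b₀` has no `ζ`-part, the `ζ`-coefficient of `j b₁` is `1`, so that of `j_λ(b)` is
`λ`. Reading off that coordinate is a continuous left inverse of `λ ↦ (j_λ(a))_a`, and a map
with a continuous left inverse into a Hausdorff space is a closed embedding.
-/

section

variable {k : Type} [Field k] {q : ℕ}

def IsGradedSubalgebra (A : Subalgebra k (Grassmann k q)) : Prop :=
  ∀ a ∈ A, ∃ a₀ a₁ : Grassmann k q,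
    a₀ ∈ A ∧ a₀ ∈ grassGrade k q 0 ∧ a₁ ∈ A ∧ a₁ ∈ grassGrade k q 1 ∧ a = a₀ + a₁

def IsOddRescaling {A : Subalgebra k (Grassmann k q)} (j : A →ₐ[k] DualNumber k)
    (J : k → (A →ₐ[k] DualNumber k)) : Prop :=
  ∀ (lam : k) (a a₀ a₁ : A), (a₀ : Grassmann k q) ∈ grassGrade k q 0 →
    (a₁ : Grassmann k q) ∈ grassGrade k q 1 → a = a₀ + a₁ →
    J lam a = algebraMap k (DualNumber k) (grassAug k q (a₀ : Grassmann k q)) + lam • j a₁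

variable {A : Subalgebra k (Grassmann k q)} {j : A →ₐ[k] DualNumber k}
  {J : k → (A →ₐ[k] DualNumber k)}

theorem IsOddRescaling.exists_forall_apply_eq_add_smul (hJ : IsOddRescaling j J)
    (hA : IsGradedSubalgebra A) (a : A) :
    ∃ a₀ a₁ : A, (a₀ : Grassmann k q) ∈ grassGrade k q 0 ∧ a = a₀ + a₁ ∧
      ∀ lam : k, J lam a =
        algebraMap k (DualNumber k) (grassAug k q (a₀ : Grassmann k q)) + lam • j a₁ := by
  obtain ⟨a₀, a₁, ha₀A, ha₀, ha₁A, ha₁, hsum⟩ := hA a a.2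
  exact ⟨⟨a₀, ha₀A⟩, ⟨a₁, ha₁A⟩, ha₀, Subtype.ext hsum,
    fun lam => hJ lam a ⟨a₀, ha₀A⟩ ⟨a₁, ha₁A⟩ ha₀ ha₁ (Subtype.ext hsum)⟩

theorem IsOddRescaling.continuous [TopologicalSpace k] [IsTopologicalRing k]
    (hJ : IsOddRescaling j J) (hA : IsGradedSubalgebra A) :
    Continuous fun (lam : k) (a : A) => J lam a := by
  refine continuous_pi fun a => ?_
  obtain ⟨_, _, -, -, hJa⟩ := hJ.exists_forall_apply_eq_add_smul hA a
  simp only [hJa]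
  fun_prop

theorem IsOddRescaling.exists_forall_snd_apply_eq_self (hJ : IsOddRescaling j J)
    (hA : IsGradedSubalgebra A) (hjsurj : Function.Surjective j)
    (hjpar₀ : ∀ a : A, (a : Grassmann k q) ∈ grassGrade k q 0 → TrivSqZeroExt.snd (j a) = 0) :
    ∃ b : A, ∀ lam : k, TrivSqZeroExt.snd (J lam b) = lam := by
  obtain ⟨b, hb⟩ := hjsurj DualNumber.eps
  obtain ⟨b₀, b₁, hb₀, rfl, hJb⟩ := hJ.exists_forall_apply_eq_add_smul hA b
  have hb₁ : TrivSqZeroExt.snd (j b₁) = 1 := by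
    simpa [hjpar₀ b₀ hb₀] using congrArg TrivSqZeroExt.snd hb
  refine ⟨b₀ + b₁, fun lam => ?_⟩
  simp [hJb, TrivSqZeroExt.algebraMap_eq_inl', hb₁]

end

theorem stmt8_general (k : Type) [Field k] [TopologicalSpace k] [IsTopologicalRing k]
    [T2Space k] (q : ℕ)
    (A : Subalgebra k (Grassmann k q))
    (hgraded : ∀ a ∈ A, ∃ a₀ a₁ : Grassmann k q,
      a₀ ∈ A ∧ a₀ ∈ grassGrade k q 0 ∧ a₁ ∈ A ∧ a₁ ∈ grassGrade k q 1 ∧ a = a₀ + a₁)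
    (j : A →ₐ[k] DualNumber k)
    (hjsurj : Function.Surjective j)
    (hjpar₀ : ∀ a : A, (a : Grassmann k q) ∈ grassGrade k q 0 →
      TrivSqZeroExt.snd (j a) = 0)
    (J : k → (A →ₐ[k] DualNumber k))
    (hJ : ∀ (lam : k) (a a₀ a₁ : A), (a₀ : Grassmann k q) ∈ grassGrade k q 0 →
      (a₁ : Grassmann k q) ∈ grassGrade k q 1 → a = a₀ + a₁ →
      J lam a = algebraMap k (DualNumber k) (grassAug k q (a₀ : Grassmann k q))
        + lam • j a₁) :
    Topology.IsClosedEmbedding (fun (lam : k) (a : A) => J lam a) := by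
  obtain ⟨b, hb⟩ := IsOddRescaling.exists_forall_snd_apply_eq_self hJ hgraded hjsurj hjpar₀
  exact Function.LeftInverse.isClosedEmbedding
    (f := fun p : A → DualNumber k => TrivSqZeroExt.snd (p b)) hb
    (TrivSqZeroExt.continuous_snd.comp (continuous_apply b))
    (IsOddRescaling.continuous hJ hgraded)

/-- Let `k` be a Hausdorff topological field, `A` a graded unital subalgebra of `∧(q)`,
`j : A → k[ζ]/(ζ²)` a surjective parity-preserving homomorphism, and
`J λ = j_λ` the family `j_λ(a₀ + a₁) = β(a₀)·1 + λ·j(a₁)`.  Then `λ ↦ (j_λ(a))_{a ∈ A}`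
is a homeomorphism of `k` onto its image and its image is closed in the Tychonoff product
`∏_{a ∈ A} k[ζ]/(ζ²)`, i.e. this map is a closed embedding. -/
theorem stmt8 (k : Type) [Field k] [TopologicalSpace k] [IsTopologicalRing k]
    [ContinuousInv₀ k] [T2Space k] (q : ℕ)
    (A : Subalgebra k (Grassmann k q))
    (hgraded : ∀ a ∈ A, ∃ a₀ a₁ : Grassmann k q,
      a₀ ∈ A ∧ a₀ ∈ grassGrade k q 0 ∧ a₁ ∈ A ∧ a₁ ∈ grassGrade k q 1 ∧ a = a₀ + a₁)
    (j : A →ₐ[k] DualNumber k)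
    (hjsurj : Function.Surjective j)
    (hjpar₀ : ∀ a : A, (a : Grassmann k q) ∈ grassGrade k q 0 →
      TrivSqZeroExt.snd (j a) = 0)
    (hjpar₁ : ∀ a : A, (a : Grassmann k q) ∈ grassGrade k q 1 →
      TrivSqZeroExt.fst (j a) = 0)
    (J : k → (A →ₐ[k] DualNumber k))
    (hJ : ∀ (lam : k) (a a₀ a₁ : A), (a₀ : Grassmann k q) ∈ grassGrade k q 0 →
      (a₁ : Grassmann k q) ∈ grassGrade k q 1 → a = a₀ + a₁ →
      J lam a = algebraMap k (DualNumber k) (grassAug k q (a₀ : Grassmann k q))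
        + lam • j a₁) :
    Topology.IsClosedEmbedding (fun (lam : k) (a : A) => J lam a) :=
  stmt8_general k q A hgraded j hjsurj hjpar₀ J hJ
end

section
/- Let k be a Hausdorff topological field that is not compact, q a natural number, and A a graded unital subalgebra of the Grassmann algebra ∧(q) over k whose odd sector is nontrivial. Then the set of all parity-preserving unital k-algebra homomorphisms from A to the dual numbers k[ζ]/(ζ²), equipped with the topology of pointwise convergence (i.e. the subspace topology inherited from the Tychonoff product ∏_{a ∈ A} k[ζ]/(ζ²), where k[ζ]/(ζ²) ≅ k × k carries the product topology), is not a compact topological space. -/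
/-!
For `t ∈ k` let `φₜ(x) = ε(x) + t D(x₁) ζ`, where `ε` is the augmentation of `∧(q)`, `x₁` is the
odd part of `x`, and `D` is a linear form on `∧(q)` with `D b = 1` for some odd `b ∈ A` and
`D (x y) = D (y x) = ε(x) D(y)` for all `x` and all odd `y ∈ A`. These identities make
`x ↦ t D(x₁)` a point derivation at `ε`, so `φₜ` is a parity-preserving algebra homomorphism,
and `f ↦ snd (f b)` maps the space of such homomorphisms continuously onto the noncompact `k`.

To find `D`, let `m` be the least exterior degree occurring in an odd element of `A`, pick such
an element `b`, and let `D` factor through the projection onto degree `m` with `D b = 1`. If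
`ε(r) = 0` then `r` has no component of degree `0`, so `r y` and `y r` have no component of
degree `≤ m` for odd `y ∈ A`.
-/

open ExteriorAlgebra

namespace DualNumber

variable {R C : Type*} [CommRing R] [Ring C] [Algebra R C] (χ : C →ₐ[R] R) (d : C →ₗ[R] R)
  (hd : ∀ x y, d (x * y) = χ x * d y + d x * χ y)

def algHomOfLeibniz : C →ₐ[R] DualNumber R :=
  AlgHom.ofLinearMap
    ((TrivSqZeroExt.inlAlgHom R R R).toLinearMap ∘ₗ χ.toLinearMap + TrivSqZeroExt.inrHom R R ∘ₗ d)
    (by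
      have hd1 : d 1 = 0 := by simpa using hd 1 1
      simp [hd1])
    (fun x y => by ext <;> simp [hd, mul_comm])

@[simp]
lemma fst_algHomOfLeibniz (x : C) : (algHomOfLeibniz χ d hd x).fst = χ x := by
  simp [algHomOfLeibniz]

@[simp]
lemma snd_algHomOfLeibniz (x : C) : (algHomOfLeibniz χ d hd x).snd = d x := by
  simp [algHomOfLeibniz]

end DualNumber

lemma ZMod.eq_zero_or_eq_one (i : ZMod 2) : i = 0 ∨ i = 1 := by
  decide +revert

namespace GradedAlgebra

open DirectSum

variable {R B : Type*} [CommRing R] [Ring B] [Algebra R B]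

section

variable {ι : Type*} [DecidableEq ι] [AddMonoid ι] (𝒜 : ι → Submodule R B) [GradedAlgebra 𝒜]

lemma proj_mem (i : ι) (x : B) : proj 𝒜 i x ∈ 𝒜 i := by
  rw [proj_apply]
  exact SetLike.coe_mem _

lemma proj_apply_of_mem {x : B} {i : ι} (hx : x ∈ 𝒜 i) (n : ι) :
    proj 𝒜 n x = if i = n then x else 0 := by
  split_ifs with h
  · subst h
    exact decompose_of_mem_same 𝒜 hx
  · exact decompose_of_mem_ne 𝒜 hx h

lemma exists_proj_ne_zero {x : B} (hx : x ≠ 0) : ∃ n, proj 𝒜 n x ≠ 0 := by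
  by_contra! h
  exact hx <| (decompose 𝒜).injective <|
    DFinsupp.ext fun n => Subtype.ext (by simpa [proj_apply] using h n)

end

section ZModTwo

variable (𝒜 : ZMod 2 → Submodule R B) [GradedAlgebra 𝒜]

lemma proj_zero_add_proj_one (x : B) : proj 𝒜 0 x + proj 𝒜 1 x = x := by
  induction x using DirectSum.Decomposition.inductionOn 𝒜 with
  | zero => simp
  | add x y hx hy => rw [map_add, map_add, add_add_add_comm, hx, hy]
  | @homogeneous i x =>
    obtain ⟨x, hx⟩ := x
    obtain rfl | rfl := i.eq_zero_or_eq_one <;> simp [proj_apply_of_mem 𝒜 hx]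

lemma proj_one_mul (x y : B) :
    proj 𝒜 1 (x * y) = proj 𝒜 0 x * proj 𝒜 1 y + proj 𝒜 1 x * proj 𝒜 0 y := by
  induction x using DirectSum.Decomposition.inductionOn 𝒜 with
  | zero => simp
  | add x x' hx hx' => simp only [add_mul, map_add, hx, hx']; abel
  | @homogeneous i x =>
    induction y using DirectSum.Decomposition.inductionOn 𝒜 with
    | zero => simp
    | add y y' hy hy' => simp only [mul_add, map_add, hy, hy']; abel
    | @homogeneous j y =>
      obtain ⟨x, hx⟩ := x
      obtain ⟨y, hy⟩ := y
      simp only [proj_apply_of_mem 𝒜 hx, proj_apply_of_mem 𝒜 hy,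
        proj_apply_of_mem 𝒜 (SetLike.mul_mem_graded hx hy)]
      obtain rfl | rfl := i.eq_zero_or_eq_one <;> obtain rfl | rfl := j.eq_zero_or_eq_one <;>
        simp [show (1 + 1 : ZMod 2) = 0 from rfl]

lemma proj_one_mem {A : Set B}
    (hA : ∀ a ∈ A, ∃ a₀ a₁ : B, a₀ ∈ A ∧ a₀ ∈ 𝒜 0 ∧ a₁ ∈ A ∧ a₁ ∈ 𝒜 1 ∧ a = a₀ + a₁)
    {x : B} (hx : x ∈ A) : proj 𝒜 1 x ∈ A := by
  obtain ⟨a₀, a₁, -, ha₀, ha₁A, ha₁, rfl⟩ := hA x hx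
  rwa [map_add, proj_apply_of_mem 𝒜 ha₀, proj_apply_of_mem 𝒜 ha₁, if_neg (by decide), if_pos rfl,
    zero_add]

end ZModTwo

lemma proj_mul_eq_zero_of_lt (𝒜 : ℕ → Submodule R B) [GradedAlgebra 𝒜] {x y : B} {p r n : ℕ}
    (hx : ∀ i < p, proj 𝒜 i x = 0) (hy : ∀ j < r, proj 𝒜 j y = 0) (hn : n < p + r) :
    proj 𝒜 n (x * y) = 0 := by
  rw [proj_apply, decompose_mul, coe_mul_apply_eq_sum_antidiagonal]
  refine Finset.sum_eq_zero fun ij hij => ?_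
  rw [Finset.HasAntidiagonal.mem_antidiagonal] at hij
  rcases lt_or_ge ij.1 p with hi | hi
  · rw [← proj_apply, hx _ hi, zero_mul]
  · rw [← proj_apply 𝒜 ij.2, hy _ (by omega), mul_zero]

lemma exists_dual_eq_one_and_mul_eq_zero {K : Type*} [Field K] [Algebra K B]
    (𝒜 : ℕ → Submodule K B) [GradedAlgebra 𝒜] {V : Set B} (hV : ∃ b ∈ V, b ≠ 0) :
    ∃ b ∈ V, ∃ D : Module.Dual K B, D b = 1 ∧
      ∀ r, proj 𝒜 0 r = 0 → ∀ y ∈ V, D (r * y) = 0 ∧ D (y * r) = 0 := by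
  classical
  have hex : ∃ n, ∃ y ∈ V, proj 𝒜 n y ≠ 0 :=
    let ⟨b, hbV, hb⟩ := hV
    let ⟨n, hn⟩ := exists_proj_ne_zero 𝒜 hb
    ⟨n, b, hbV, hn⟩
  obtain ⟨b, hbV, hb⟩ := Nat.find_spec hex
  have hlow : ∀ y ∈ V, ∀ n < Nat.find hex, proj 𝒜 n y = 0 := fun y hy n hn => by
    by_contra h
    exact Nat.find_min hex hn ⟨y, hy, h⟩
  obtain ⟨g, hg⟩ := Module.Projective.exists_dual_eq_one K hb
  refine ⟨b, hbV, g ∘ₗ proj 𝒜 (Nat.find hex), hg, fun r hr y hy => ?_⟩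
  have hr' : ∀ i < 1, proj 𝒜 i r = 0 := fun i hi => by rwa [Nat.lt_one_iff.mp hi]
  simp only [LinearMap.comp_apply]
  rw [proj_mul_eq_zero_of_lt 𝒜 hr' (hlow y hy) (by omega),
    proj_mul_eq_zero_of_lt 𝒜 (hlow y hy) hr' (by omega), map_zero]
  exact ⟨rfl, rfl⟩

end GradedAlgebra

namespace ExteriorAlgebra

variable {R M : Type*} [CommRing R] [AddCommGroup M] [Module R M]

open DirectSum in
lemma proj_zero_eq_algebraMap_algebraMapInv (x : ExteriorAlgebra R M) :
    GradedAlgebra.proj (fun i : ℕ => ⋀[R]^i M) 0 x = algebraMap R _ (algebraMapInv x) := by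
  induction x using ExteriorAlgebra.induction with
  | algebraMap r =>
    rw [GradedAlgebra.proj_apply, decompose_of_mem_same _ (SetLike.algebraMap_mem_graded _ r),
      algebraMap_leftInverse]
  | ι v =>
    have hv : ι R v ∈ ⋀[R]^1 M := by simp
    rw [GradedAlgebra.proj_apply, decompose_of_mem_ne (fun i : ℕ => ⋀[R]^i M) hv one_ne_zero]
    simp [algebraMapInv]
  | mul a b ha hb =>
    have := map_mul (GradedRing.projZeroRingHom (fun i : ℕ => ⋀[R]^i M)) a b
    simp only [GradedRing.projZeroRingHom_apply, ← GradedAlgebra.proj_apply] at this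
    rw [this, ha, hb, map_mul, map_mul]
  | add a b ha hb => rw [map_add, ha, hb, map_add, map_add]

lemma algebraMapInv_eq_zero_of_mem_evenOdd_one {x : ExteriorAlgebra R M}
    (hx : x ∈ CliffordAlgebra.evenOdd (0 : QuadraticForm R M) 1) : algebraMapInv x = 0 := by
  induction x, hx using CliffordAlgebra.odd_induction with
  | ι v => simp [algebraMapInv]
  | add x y _ _ hx hy => rw [map_add, hx, hy, add_zero]
  | ι_mul_ι_mul m₁ m₂ x _ hx => rw [map_mul, hx, mul_zero]

end ExteriorAlgebra

lemma not_isCompact_of_continuous_surjOn {X Y : Type*} [TopologicalSpace X] [TopologicalSpace Y]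
    [NoncompactSpace Y] {K : Set X} {f : X → Y} (hf : Continuous f)
    (hK : Set.SurjOn f K Set.univ) : ¬IsCompact K := fun hc =>
  noncompact_univ Y (by simpa [hK.image_eq_of_mapsTo (Set.mapsTo_univ _ _)] using hc.image hf)

section Grassmann

open GradedAlgebra

variable {k : Type} [Field k] {q : ℕ}

noncomputable instance : GradedAlgebra (grassGrade k q) := CliffordAlgebra.gradedAlgebra _

lemma exists_dual_eq_one_and_mul_eq_algebraMapInv_mul (A : Subalgebra k (Grassmann k q))
    (hodd : ∃ a : Grassmann k q, a ∈ A ∧ a ∈ grassGrade k q 1 ∧ a ≠ 0) :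
    ∃ b ∈ A, b ∈ grassGrade k q 1 ∧ ∃ D : Module.Dual k (Grassmann k q), D b = 1 ∧
      ∀ x, ∀ y ∈ A, y ∈ grassGrade k q 1 →
        D (x * y) = algebraMapInv x * D y ∧ D (y * x) = algebraMapInv x * D y := by
  obtain ⟨a, haA, ha1, ha⟩ := hodd
  obtain ⟨b, ⟨hbA, hb1⟩, D, hDb, hD⟩ :=
    exists_dual_eq_one_and_mul_eq_zero (fun i : ℕ => ⋀[k]^i (Fin q → k))
      (V := {y | y ∈ A ∧ y ∈ grassGrade k q 1}) ⟨a, ⟨haA, ha1⟩, ha⟩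
  refine ⟨b, hbA, hb1, D, hDb, fun x y hyA hy1 => ?_⟩
  set c := algebraMapInv x
  have hr : proj (fun i : ℕ => ⋀[k]^i (Fin q → k)) 0 (x - algebraMap k _ c) = 0 := by
    rw [proj_zero_eq_algebraMap_algebraMapInv, map_sub, algebraMap_leftInverse, sub_self,
      map_zero]
  obtain ⟨hry, hyr⟩ := hD _ hr y ⟨hyA, hy1⟩
  have hx : x = algebraMap k _ c + (x - algebraMap k _ c) := by abel
  constructor
  · rw [hx, add_mul, map_add, hry, ← Algebra.smul_def, map_smul, smul_eq_mul, add_zero]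
  · rw [hx, mul_add, map_add, hyr, ← Algebra.commutes, ← Algebra.smul_def, map_smul, smul_eq_mul,
      add_zero]

lemma exists_parity_algHom_snd_eq (A : Subalgebra k (Grassmann k q))
    (hA : ∀ x ∈ A, proj (grassGrade k q) 1 x ∈ A) {b : Grassmann k q} (hbA : b ∈ A)
    (hb : b ∈ grassGrade k q 1) {D : Module.Dual k (Grassmann k q)} (hDb : D b = 1)
    (hD : ∀ x, ∀ y ∈ A, y ∈ grassGrade k q 1 →
        D (x * y) = algebraMapInv x * D y ∧ D (y * x) = algebraMapInv x * D y) (t : k) :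
    ∃ φ : A →ₐ[k] DualNumber k,
      (∀ a : A, (a : Grassmann k q) ∈ grassGrade k q 0 → (φ a).snd = 0) ∧
      (∀ a : A, (a : Grassmann k q) ∈ grassGrade k q 1 → (φ a).fst = 0) ∧
      (φ ⟨b, hbA⟩).snd = t := by
  have hε (x : Grassmann k q) : algebraMapInv (proj (grassGrade k q) 0 x) = algebraMapInv x := by
    conv_rhs => rw [← proj_zero_add_proj_one (grassGrade k q) x]
    rw [map_add, algebraMapInv_eq_zero_of_mem_evenOdd_one (x := proj (grassGrade k q) 1 x)
      (proj_mem _ 1 x), add_zero]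
  set d : A →ₗ[k] k := t • (D ∘ₗ proj (grassGrade k q) 1 ∘ₗ A.val.toLinearMap)
  have hd (x y : A) : d (x * y) = (algebraMapInv.comp A.val) x * d y +
      d x * (algebraMapInv.comp A.val) y := by
    simp only [d, AlgHom.comp_apply, LinearMap.smul_apply, LinearMap.comp_apply,
      AlgHom.toLinearMap_apply, Subalgebra.coe_val, Subalgebra.coe_mul, proj_one_mul, map_add,
      smul_eq_mul]
    rw [(hD _ _ (hA y y.2) (proj_mem _ 1 _)).1, (hD _ _ (hA x x.2) (proj_mem _ 1 _)).2, hε, hε]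
    ring
  refine ⟨DualNumber.algHomOfLeibniz (algebraMapInv.comp A.val) d hd, fun a ha => ?_,
    fun a ha => ?_, ?_⟩
  · simp [d, proj_apply_of_mem _ ha]
  · simpa using algebraMapInv_eq_zero_of_mem_evenOdd_one ha
  · simp [d, proj_apply_of_mem _ hb, hDb]

end Grassmann

theorem stmt9_general (k : Type) [Field k] [TopologicalSpace k] [NoncompactSpace k] (q : ℕ)
    (A : Subalgebra k (Grassmann k q))
    (hgraded : ∀ a ∈ A, ∃ a₀ a₁ : Grassmann k q,
      a₀ ∈ A ∧ a₀ ∈ grassGrade k q 0 ∧ a₁ ∈ A ∧ a₁ ∈ grassGrade k q 1 ∧ a = a₀ + a₁)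
    (hodd : ∃ a : Grassmann k q, a ∈ A ∧ a ∈ grassGrade k q 1 ∧ a ≠ 0) :
    ¬ IsCompact {f : A → DualNumber k | ∃ φ : A →ₐ[k] DualNumber k,
        (∀ a : A, (a : Grassmann k q) ∈ grassGrade k q 0 →
          TrivSqZeroExt.snd (φ a) = 0) ∧
        (∀ a : A, (a : Grassmann k q) ∈ grassGrade k q 1 →
          TrivSqZeroExt.fst (φ a) = 0) ∧
        ⇑φ = f} := by
  obtain ⟨b, hbA, hb, D, hDb, hD⟩ := exists_dual_eq_one_and_mul_eq_algebraMapInv_mul A hodd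
  refine not_isCompact_of_continuous_surjOn (f := fun f => (f ⟨b, hbA⟩).snd)
    (TrivSqZeroExt.continuous_snd.comp (continuous_apply _)) fun t _ => ?_
  obtain ⟨φ, hφ₀, hφ₁, hφb⟩ :=
    exists_parity_algHom_snd_eq A (fun _ => GradedAlgebra.proj_one_mem _ hgraded) hbA hb hDb hD t
  exact ⟨φ, ⟨φ, hφ₀, hφ₁, rfl⟩, hφb⟩

/-- Let `k` be a Hausdorff topological field that is not compact, and let `A` be a graded
unital subalgebra of `∧(q)` with nontrivial odd sector.  Then the set of parity-preserving
unital `k`-algebra homomorphisms `A → k[ζ]/(ζ²)`, with the topology of pointwise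
convergence (the subspace topology from the Tychonoff product `∏_{a ∈ A} k[ζ]/(ζ²)`),
is not compact. -/
theorem stmt9 (k : Type) [Field k] [TopologicalSpace k] [IsTopologicalRing k]
    [ContinuousInv₀ k] [T2Space k] [NoncompactSpace k] (q : ℕ)
    (A : Subalgebra k (Grassmann k q))
    (hgraded : ∀ a ∈ A, ∃ a₀ a₁ : Grassmann k q,
      a₀ ∈ A ∧ a₀ ∈ grassGrade k q 0 ∧ a₁ ∈ A ∧ a₁ ∈ grassGrade k q 1 ∧ a = a₀ + a₁)
    (hodd : ∃ a : Grassmann k q, a ∈ A ∧ a ∈ grassGrade k q 1 ∧ a ≠ 0) :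
    ¬ IsCompact {f : A → DualNumber k | ∃ φ : A →ₐ[k] DualNumber k,
        (∀ a : A, (a : Grassmann k q) ∈ grassGrade k q 0 →
          TrivSqZeroExt.snd (φ a) = 0) ∧
        (∀ a : A, (a : Grassmann k q) ∈ grassGrade k q 1 →
          TrivSqZeroExt.fst (φ a) = 0) ∧
        ⇑φ = f} :=
  stmt9_general k q A hgraded hodd
end

section
/- Let k be a topological field (with continuous addition, multiplication and inversion) and p, q natural numbers. Topologize ∧(q) as a finite-dimensional k-vector space (product topology via a monomial basis), give the set Hom_gr(∧(p), ∧(q)) of all parity-preserving unital k-algebra homomorphisms ∧(p) → ∧(q) the topology of pointwise convergence (the subspace topology from the product ∧(q)^{∧(p)}), and give (∧(q)₁)^p the product topology. Then the bijection φ ↦ (φ(ξ₁), …, φ(ξ_p)), where ξ₁, …, ξ_p are the standard odd generators of ∧(p), is a homeomorphism from Hom_gr(∧(p), ∧(q)) onto (∧(q)₁)^p. -/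
open ExteriorAlgebra

/-- A unital algebra homomorphism between Grassmann algebras is parity-preserving if it
maps even elements to even elements and odd elements to odd elements. -/
def IsParityHom {k : Type} [Field k] {p q : ℕ} (φ : Grassmann k p →ₐ[k] Grassmann k q) :
    Prop :=
  ∀ (i : ZMod 2) (x : Grassmann k p), x ∈ grassGrade k p i → φ x ∈ grassGrade k q i

/-- The standard odd generators `ξ₁, …, ξ_p` of `∧(p)`. -/
noncomputable def xi (k : Type) [Field k] (p : ℕ) (i : Fin p) : Grassmann k p :=
  ExteriorAlgebra.ι k (Pi.single i (1 : k))

theorem xi_mem_odd (k : Type) [Field k] (p : ℕ) (i : Fin p) :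
    xi k p i ∈ grassGrade k p 1 :=
  CliffordAlgebra.ι_mem_evenOdd_one _ _

/-- The topology on `∧(q)` as a finite-dimensional `k`-vector space over the topological
field `k`: the product topology transported along the coordinates of a basis. -/
noncomputable def grassTopology (k : Type) [Field k] [TopologicalSpace k] (q : ℕ) :
    TopologicalSpace (Grassmann k q) :=
  TopologicalSpace.induced
    (fun v i => (Module.Basis.ofVectorSpace k (Grassmann k q)).repr v i) Pi.topologicalSpace

/-!
Odd elements of an exterior algebra anticommute and square to zero (for the square, an induction
over the odd part is needed, since `2` may not be invertible). Hence, by the universal property,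
every tuple `y` of odd elements of `∧(q)` is the image of `ξ₁, …, ξ_p` under a unique algebra
homomorphism `liftOdd y`, which is parity-preserving because it sends generators to odd
elements. For the topology, coordinates in a finite basis make `∧(q)` a topological algebra;
the forward map is evaluation at the `ξᵢ`, and `y ↦ liftOdd y x` is continuous by induction on
`x`.
-/

theorem SetLike.pow_le_graded {R A ι : Type*} [CommSemiring R] [Semiring A] [Algebra R A]
    [AddMonoid ι] {𝒜 : ι → Submodule R A} [SetLike.GradedMonoid 𝒜] {S : Submodule R A} {i : ι}
    (h : S ≤ 𝒜 i) (n : ℕ) : S ^ n ≤ 𝒜 (n • i) := by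
  induction n with
  | zero => simpa using Submodule.one_le.mpr SetLike.GradedOne.one_mem
  | succ n ih =>
    rw [pow_succ, succ_nsmul]
    exact Submodule.mul_le.mpr fun a ha b hb => SetLike.mul_mem_graded (ih ha) (h hb)

namespace CliffordAlgebra

variable {R M A : Type*} [CommRing R] [AddCommGroup M] [Module R M] [Ring A] [Algebra R A]
  {Q : QuadraticForm R M}

theorem map_evenOdd_le (𝒜 : ZMod 2 → Submodule R A) [SetLike.GradedMonoid 𝒜]
    (f : CliffordAlgebra Q →ₐ[R] A) (hf : ∀ m, f (ι Q m) ∈ 𝒜 1) (i : ZMod 2) :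
    (evenOdd Q i).map f.toLinearMap ≤ 𝒜 i := by
  rw [evenOdd, Submodule.map_iSup, iSup_le_iff]
  rintro ⟨n, rfl⟩
  have h1 : (LinearMap.range (ι Q)).map f.toLinearMap ≤ 𝒜 1 := by
    rintro _ ⟨_, ⟨m, rfl⟩, rfl⟩
    exact hf m
  simpa only [Submodule.map_pow, nsmul_one] using SetLike.pow_le_graded h1 n

end CliffordAlgebra

theorem Commute.mul_of_anticommute {A : Type*} [Ring A] {y a b : A}
    (ha : y * a = -(a * y)) (hb : y * b = -(b * y)) : Commute y (a * b) := by
  rw [Commute, SemiconjBy, ← mul_assoc, ha, neg_mul, mul_assoc, hb, mul_neg, neg_neg, mul_assoc]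

theorem anticommute_mul_mul_mul {A : Type*} [Ring A] {y a b x : A}
    (ha : y * a = -(a * y)) (hb : y * b = -(b * y)) (hx : y * x = -(x * y)) :
    y * (a * b * x) = -(a * b * x * y) := by
  rw [mul_assoc _ x, (Commute.mul_of_anticommute ha hb).left_comm, hx, mul_neg, mul_assoc]

namespace ExteriorAlgebra

variable {R M : Type*} [CommRing R] [AddCommGroup M] [Module R M]

theorem ι_mul_anticomm_of_mem_odd (m : M) {y : ExteriorAlgebra R M}
    (hy : y ∈ CliffordAlgebra.evenOdd 0 1) : ι R m * y = -(y * ι R m) := by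
  have hι (w : M) : ι R m * ι R w = -(ι R w * ι R m) :=
    eq_neg_of_add_eq_zero_left (ι_add_mul_swap m w)
  induction y, hy using CliffordAlgebra.odd_induction with
  | ι w => exact hι w
  | add x z _ _ ihx ihz => rw [mul_add, add_mul, ihx, ihz, neg_add]
  | ι_mul_ι_mul m₁ m₂ x _ ih => exact anticommute_mul_mul_mul (hι m₁) (hι m₂) ih

theorem mul_ι_anticomm_of_mem_odd (m : M) {y : ExteriorAlgebra R M}
    (hy : y ∈ CliffordAlgebra.evenOdd 0 1) : y * ι R m = -(ι R m * y) :=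
  neg_eq_iff_eq_neg.mp (ι_mul_anticomm_of_mem_odd m hy).symm

theorem mul_anticomm_of_mem_odd {y z : ExteriorAlgebra R M}
    (hy : y ∈ CliffordAlgebra.evenOdd 0 1) (hz : z ∈ CliffordAlgebra.evenOdd 0 1) :
    y * z = -(z * y) := by
  induction z, hz using CliffordAlgebra.odd_induction with
  | ι w => exact mul_ι_anticomm_of_mem_odd w hy
  | add x z _ _ ihx ihz => rw [mul_add, add_mul, ihx, ihz, neg_add]
  | ι_mul_ι_mul m₁ m₂ x _ ih =>
    exact anticommute_mul_mul_mul (mul_ι_anticomm_of_mem_odd m₁ hy)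
      (mul_ι_anticomm_of_mem_odd m₂ hy) ih

theorem mul_self_eq_zero_of_mem_odd {y : ExteriorAlgebra R M}
    (hy : y ∈ CliffordAlgebra.evenOdd 0 1) : y * y = 0 := by
  induction y, hy using CliffordAlgebra.odd_induction with
  | ι w => exact ι_sq_zero w
  | add x z hx hz ihx ihz =>
    rw [add_mul, mul_add, mul_add, ihx, ihz, mul_anticomm_of_mem_odd hx hz]
    abel
  | ι_mul_ι_mul m₁ m₂ x hx ih =>
    have hc := Commute.mul_of_anticommute (mul_ι_anticomm_of_mem_odd m₁ hx)
      (mul_ι_anticomm_of_mem_odd m₂ hx)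
    change ι R m₁ * ι R m₂ * x * (ι R m₁ * ι R m₂ * x) = 0
    rw [mul_assoc _ x, hc.left_comm, ih, mul_zero, mul_zero]

variable {σ N : Type*} [Fintype σ] [AddCommGroup N] [Module R N]

noncomputable def liftOdd (y : σ → CliffordAlgebra.evenOdd (0 : QuadraticForm R N) 1) :
    ExteriorAlgebra R (σ → R) →ₐ[R] ExteriorAlgebra R N :=
  lift R ⟨(CliffordAlgebra.evenOdd 0 1).subtype ∘ₗ Fintype.linearCombination R y,
    fun _ => mul_self_eq_zero_of_mem_odd (Submodule.coe_mem _)⟩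

theorem liftOdd_ι (y : σ → CliffordAlgebra.evenOdd (0 : QuadraticForm R N) 1) (v : σ → R) :
    liftOdd y (ι R v) = ∑ i, v i • (y i : ExteriorAlgebra R N) := by
  simp [liftOdd, Fintype.linearCombination_apply]

theorem liftOdd_ι_mem_odd (y : σ → CliffordAlgebra.evenOdd (0 : QuadraticForm R N) 1)
    (v : σ → R) : liftOdd y (ι R v) ∈ CliffordAlgebra.evenOdd 0 1 := by
  rw [liftOdd, lift_ι_apply]
  exact Submodule.coe_mem _

theorem liftOdd_ι_single [DecidableEq σ]
    (y : σ → CliffordAlgebra.evenOdd (0 : QuadraticForm R N) 1) (i : σ) :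
    liftOdd y (ι R (Pi.single i 1)) = y i := by
  simp [liftOdd]

theorem algHom_ext_ι_single {A : Type*} [Semiring A] [Algebra R A] [DecidableEq σ]
    {f g : ExteriorAlgebra R (σ → R) →ₐ[R] A}
    (h : ∀ i, f (ι R (Pi.single i 1)) = g (ι R (Pi.single i 1))) : f = g :=
  hom_ext <| (Pi.basisFun R σ).ext fun i => by simpa using h i

variable [TopologicalSpace (ExteriorAlgebra R N)] [ContinuousAdd (ExteriorAlgebra R N)]
  [ContinuousMul (ExteriorAlgebra R N)] [ContinuousConstSMul R (ExteriorAlgebra R N)]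

theorem continuous_liftOdd_apply (x : ExteriorAlgebra R (σ → R)) :
    Continuous fun y : σ → CliffordAlgebra.evenOdd (0 : QuadraticForm R N) 1 => liftOdd y x := by
  induction x using ExteriorAlgebra.induction with
  | algebraMap r => simpa only [AlgHom.commutes] using continuous_const
  | ι v =>
    simp only [liftOdd_ι]
    fun_prop
  | mul a c iha ihc =>
    simp only [map_mul]
    exact iha.mul ihc
  | add a c iha ihc =>
    simp only [map_add]
    exact iha.add ihc

end ExteriorAlgebra

namespace Module.Basis

open Topology

section Module

variable {k A ι : Type*} [Semiring k] [TopologicalSpace k] [AddCommMonoid A] [Module k A]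
  [TopologicalSpace A] [Fintype ι] {b : Basis ι k A}

theorem continuous_linearMap_of_isInducing (hb : IsInducing b.equivFun) {M : Type*}
    [AddCommMonoid M] [Module k M] [TopologicalSpace M] [ContinuousAdd M] [ContinuousSMul k M]
    (f : A →ₗ[k] M) : Continuous f := by
  have hf : ⇑f = (f ∘ₗ b.equivFun.symm.toLinearMap) ∘ b.equivFun := by
    ext x
    simp
  rw [hf]
  exact (f ∘ₗ b.equivFun.symm.toLinearMap).continuous_on_pi.comp hb.continuous

variable [IsTopologicalSemiring k]

theorem continuousAdd_of_isInducing (hb : IsInducing b.equivFun) : ContinuousAdd A :=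
  hb.continuousAdd b.equivFun

theorem continuousSMul_of_isInducing (hb : IsInducing b.equivFun) : ContinuousSMul k A :=
  hb.continuousSMul continuous_id (map_smul b.equivFun _ _)

end Module

theorem continuousMul_of_isInducing {k A ι : Type*} [CommSemiring k] [TopologicalSpace k]
    [IsTopologicalSemiring k] [Semiring A] [Algebra k A] [TopologicalSpace A] [Fintype ι]
    {b : Basis ι k A} (hb : IsInducing b.equivFun) : ContinuousMul A := by
  have := continuousAdd_of_isInducing hb
  have := continuousSMul_of_isInducing hb
  have hmul : (fun z : A × A => z.1 * z.2) = fun z => ∑ i, b.equivFun z.1 i • (b i * z.2) := by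
    ext z
    conv_lhs => rw [← b.sum_equivFun z.1]
    simp only [Finset.sum_mul, smul_mul_assoc]
  refine ⟨?_⟩
  rw [hmul]
  refine continuous_finsetSum _ fun i _ => ?_
  exact ((continuous_apply i).comp (hb.continuous.comp continuous_fst)).smul
    ((continuous_linearMap_of_isInducing hb (LinearMap.mulLeft k (b i))).comp continuous_snd)

end Module.Basis

theorem isParityHom_liftOdd {k : Type} [Field k] {p q : ℕ} (y : Fin p → grassGrade k q 1) :
    IsParityHom (ExteriorAlgebra.liftOdd y) := fun i _ hx =>
  CliffordAlgebra.map_evenOdd_le _ _ (ExteriorAlgebra.liftOdd_ι_mem_odd y) i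
    (Submodule.mem_map_of_mem hx)

theorem stmt19_general (k : Type) [Field k] [TopologicalSpace k] [IsTopologicalRing k]
    (p q : ℕ) :
    letI : TopologicalSpace (Grassmann k q) := grassTopology k q
    letI : TopologicalSpace {φ : Grassmann k p →ₐ[k] Grassmann k q // IsParityHom φ} :=
      TopologicalSpace.induced (fun φ => (⇑φ.1 : Grassmann k p → Grassmann k q))
        Pi.topologicalSpace
    IsHomeomorph
      (fun (φ : {φ : Grassmann k p →ₐ[k] Grassmann k q // IsParityHom φ})
        (i : Fin p) =>
        (⟨φ.1 (xi k p i), φ.2 1 (xi k p i) (xi_mem_odd k p i)⟩ :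
          grassGrade k q 1)) := by
  let : TopologicalSpace (Grassmann k q) := grassTopology k q
  let : TopologicalSpace {φ : Grassmann k p →ₐ[k] Grassmann k q // IsParityHom φ} :=
    .induced (fun φ => ⇑φ.1) Pi.topologicalSpace
  have : FiniteDimensional k (Grassmann k q) :=
    .of_basis (Pi.basisFun k (Fin q)).ExteriorAlgebra
  let b := Module.Basis.ofVectorSpace k (Grassmann k q)
  have : Fintype (Module.Basis.ofVectorSpaceIndex k (Grassmann k q)) :=
    FiniteDimensional.fintypeBasisIndex b
  have hb : Topology.IsInducing b.equivFun := ⟨rfl⟩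
  have := b.continuousAdd_of_isInducing hb
  have := b.continuousSMul_of_isInducing hb
  have := b.continuousMul_of_isInducing hb
  refine isHomeomorph_iff_exists_inverse.mpr
    ⟨?_, fun y => ⟨ExteriorAlgebra.liftOdd y, isParityHom_liftOdd y⟩, fun φ => ?_, fun y => ?_, ?_⟩
  · refine continuous_pi fun i => Continuous.subtype_mk ?_ _
    exact (continuous_apply (xi k p i)).comp continuous_induced_dom
  · exact Subtype.ext <| ExteriorAlgebra.algHom_ext_ι_single fun i =>
      ExteriorAlgebra.liftOdd_ι_single _ i
  · exact funext fun i => Subtype.ext <| ExteriorAlgebra.liftOdd_ι_single y i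
  · exact continuous_induced_rng.mpr <| continuous_pi ExteriorAlgebra.continuous_liftOdd_apply

/-- For a topological field `k`, the bijection `φ ↦ (φ(ξ₁), …, φ(ξ_p))` from the space of
parity-preserving unital `k`-algebra homomorphisms `∧(p) → ∧(q)` (with the topology of
pointwise convergence) onto `(∧(q)₁)^p` (with the product topology) is a
homeomorphism. -/
theorem stmt19 (k : Type) [Field k] [TopologicalSpace k] [IsTopologicalRing k]
    [ContinuousInv₀ k] (p q : ℕ) :
    letI : TopologicalSpace (Grassmann k q) := grassTopology k q
    letI : TopologicalSpace {φ : Grassmann k p →ₐ[k] Grassmann k q // IsParityHom φ} :=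
      TopologicalSpace.induced (fun φ => (⇑φ.1 : Grassmann k p → Grassmann k q))
        Pi.topologicalSpace
    IsHomeomorph
      (fun (φ : {φ : Grassmann k p →ₐ[k] Grassmann k q // IsParityHom φ})
        (i : Fin p) =>
        (⟨φ.1 (xi k p i), φ.2 1 (xi k p i) (xi_mem_odd k p i)⟩ :
          grassGrade k q 1)) :=
  stmt19_general k p q
end
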